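/- arXiv:2201.07254 — 2 statements merged into one kernel-verified Lean document; each statement's English description precedes it below -/
import Mathlib

section
/- Encode each single-qubit Pauli by a 3-bit vector: I ↦ 000, X ↦ 011, Y ↦ 101, Z ↦ 110, and encode an N-qubit Pauli by concatenation in F_2^{3N}. Then two N-qubit Pauli operators anticommute if and only if the dot product mod 2 of their encoding vectors is 1. -/
open Finset

/-- The four single-qubit Pauli matrices `I, X, Y, Z`, indexed by `Fin 4`. -/
noncomputable def pauliMat : Fin 4 → Matrix (Fin 2) (Fin 2) ℂ :=
  ![1, !![0, 1; 1, 0], !![0, -Complex.I; Complex.I, 0], !![1, 0; 0, -1]]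

/-- The `N`-qubit Pauli operator given by the choice `p i` of Pauli on qubit `i`,
realized as the tensor (Kronecker) product matrix on `(Fin N → Fin 2)`-indexed space. -/
noncomputable def nQubitPauli (N : ℕ) (p : Fin N → Fin 4) :
    Matrix (Fin N → Fin 2) (Fin N → Fin 2) ℂ := fun a b =>
  ∏ i, pauliMat (p i) (a i) (b i)

/-- The 3-bit encoding of a single-qubit Pauli: `I ↦ 000`, `X ↦ 011`, `Y ↦ 101`, `Z ↦ 110`. -/
def enc3 : Fin 4 → Fin 3 → ZMod 2 :=
  ![![0, 0, 0], ![0, 1, 1], ![1, 0, 1], ![1, 1, 0]]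

/-- Sign character: `0 ↦ 1`, `1 ↦ -1`. -/
noncomputable def chi (s : ZMod 2) : ℂ := if s = 1 then -1 else 1

lemma zmod2_cases (s : ZMod 2) : s = 0 ∨ s = 1 := by
  fin_cases s
  · exact Or.inl rfl
  · exact Or.inr rfl

lemma chi_add (x y : ZMod 2) : chi (x + y) = chi x * chi y := by
  rcases zmod2_cases x with hx | hx <;> rcases zmod2_cases y with hy | hy <;>
    subst hx <;> subst hy <;> norm_num [chi, show (1 + 1 : ZMod 2) = 0 from rfl] <;> decide

lemma chi_sum {ι : Type*} (s : Finset ι) (f : ι → ZMod 2) :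
    ∏ i ∈ s, chi (f i) = chi (∑ i ∈ s, f i) := by
  induction s using Finset.cons_induction with
  | empty => simp [chi]
  | cons a s ha ih => rw [Finset.prod_cons, Finset.sum_cons, chi_add, ih]

lemma pauli_single (a b : Fin 4) : pauliMat a * pauliMat b =
    chi (∑ t : Fin 3, enc3 a t * enc3 b t) • (pauliMat b * pauliMat a) := by
  fin_cases a <;> fin_cases b <;>
    simp [pauliMat, enc3, chi, Fin.sum_univ_three]

lemma pauli_sq (a : Fin 4) : pauliMat a * pauliMat a = 1 := by
  fin_cases a <;>
    simp [pauliMat] <;>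
    norm_num [Matrix.mul_fin_two, ← Matrix.one_fin_two, Complex.ext_iff]

lemma nQubit_entry (N : ℕ) (p q : Fin N → Fin 4) (a b : Fin N → Fin 2) :
    (nQubitPauli N p * nQubitPauli N q) a b
      = ∏ i, (pauliMat (p i) * pauliMat (q i)) (a i) (b i) := by
  simp only [Matrix.mul_apply, nQubitPauli, ← Finset.prod_mul_distrib]
  rw [Finset.prod_univ_sum, Fintype.piFinset_univ]

lemma nQubit_selfinv (N : ℕ) (p : Fin N → Fin 4) :
    nQubitPauli N p * nQubitPauli N p = 1 := by
  ext a b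
  rw [nQubit_entry]
  simp only [pauli_sq, Matrix.one_apply]
  rw [Finset.prod_boole]
  by_cases h : a = b
  · simp [h]
  · have hna : ¬ ∀ i ∈ Finset.univ, a i = b i :=
      fun hf => h (funext fun i => hf i (Finset.mem_univ i))
    rw [if_neg hna, if_neg h]

/-- Two `N`-qubit Pauli operators anticommute if and only if the mod-2 dot product of their
3-bit-per-qubit encoding vectors in `F_2^{3N}` equals `1`. -/
theorem pauli_anticommute_iff_dot_encoding (N : ℕ) (p q : Fin N → Fin 4) :
    nQubitPauli N p * nQubitPauli N q = -(nQubitPauli N q * nQubitPauli N p) ↔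
      (∑ i : Fin N, ∑ t : Fin 3, enc3 (p i) t * enc3 (q i) t) = (1 : ZMod 2) := by
  set sTot : ZMod 2 := ∑ i : Fin N, ∑ t : Fin 3, enc3 (p i) t * enc3 (q i) t with hsTot
  have key : nQubitPauli N p * nQubitPauli N q
      = chi sTot • (nQubitPauli N q * nQubitPauli N p) := by
    ext a b
    rw [nQubit_entry, Matrix.smul_apply, nQubit_entry, smul_eq_mul, hsTot, ← chi_sum]
    rw [← Finset.prod_mul_distrib]
    exact Finset.prod_congr rfl fun i _ => by
      rw [pauli_single (p i) (q i), Matrix.smul_apply, smul_eq_mul]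
  have hQP : nQubitPauli N q * nQubitPauli N p ≠ 0 := by
    intro h
    have h1 : (nQubitPauli N q * nQubitPauli N p) * (nQubitPauli N p * nQubitPauli N q) = 1 := by
      rw [mul_assoc, ← mul_assoc (nQubitPauli N p), nQubit_selfinv, one_mul, nQubit_selfinv]
    rw [h, zero_mul] at h1
    exact zero_ne_one h1
  rw [key]
  constructor
  · intro h
    have h2 : (chi sTot + 1) • (nQubitPauli N q * nQubitPauli N p) = 0 := by
      rw [add_smul, one_smul, h, neg_add_cancel]
    have h3 : chi sTot + 1 = 0 := by
      rcases smul_eq_zero.mp h2 with h3 | h3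
      · exact h3
      · exact absurd h3 hQP
    rcases zmod2_cases sTot with hs | hs
    · rw [hs] at h3; norm_num [chi] at h3
    · exact hs
  · intro h
    rw [h]
    norm_num [chi]
end

section
/- For the oriented 1-d ladder graph (the (1,1)-nanotube) with the ground-state orientation assigning Peierls phases ±i so that each square plaquette has flux π, the Bloch single-particle Hamiltonian H(k) = i·A(e^{ik}) (a 4×4 Hermitian matrix) has all eigenvalues of absolute value at least 1 for every k; hence the single-particle gap satisfies 2λ_1 = 2. -/
/-!
In block form `H(k) = [[Y, a], [ā, -Y]]` with `Y = [[0, -i], [i, 0]]`, `Y² = 1` and a scalar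
rail hop `a = i(e^{ik} - 1)`. The scalar blocks commute with `Y`, so the cross terms cancel and
`H(k)² = (1 + |a|²)·1`. Every eigenvalue therefore satisfies `μ² = 1 + |a|² ≥ 1`, with equality
at `k = 0`, where `a = 0`.
-/

open Matrix Complex
open scoped ComplexConjugate

/-- The 4×4 Bloch single-particle Hamiltonian `H(k) = i·A(e^{ik})` of the π-flux oriented
ladder (the `(1,1)`-nanotube in its ground-state orientation), on a doubled (magnetic) unit
cell with sites `(1A, 2A, 1B, 2B)`: Peierls phases `±i` on every bond, chosen so each
square plaquette carries flux `π`. Rung couplings are `±i` (staggered) and rail couplings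
are `i`, with inter-cell hops acquiring the Bloch phase `e^{ik}`. -/
noncomputable def ladderBloch (k : ℝ) : Matrix (Fin 4) (Fin 4) ℂ :=
  let a : ℂ := -I + I * Complex.exp (I * k)
  !![0, -I, a, 0;
     I, 0, 0, a;
     (starRingEnd ℂ) a, 0, 0, I;
     0, (starRingEnd ℂ) a, -I, 0]

theorem spectrum.sq_eq_of_sq_eq_algebraMap {𝕜 A : Type*} [Field 𝕜] [Ring A] [Nontrivial A]
    [Algebra 𝕜 A] {a : A} {c : 𝕜} (h : a ^ 2 = algebraMap 𝕜 A c) {μ : 𝕜}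
    (hμ : μ ∈ spectrum 𝕜 a) : μ ^ 2 = c := by
  simpa [h, spectrum.scalar_eq] using spectrum.pow_mem_pow a 2 hμ

theorem Complex.one_le_norm_of_sq_eq {μ : ℂ} {t : ℝ} (ht : 1 ≤ t) (h : μ ^ 2 = t) :
    1 ≤ ‖μ‖ := by
  have hnorm : ‖μ‖ ^ 2 = t := by
    rw [← norm_pow, h, norm_real, Real.norm_of_nonneg (by linarith)]
  nlinarith [norm_nonneg μ]

noncomputable def ladderHop (k : ℝ) : ℂ := -I + I * exp (I * k)

theorem ladderHop_zero : ladderHop 0 = 0 := by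
  simp [ladderHop]

theorem ladderBloch_eq (k : ℝ) :
    ladderBloch k =
      !![0, -I, ladderHop k, 0;
         I, 0, 0, ladderHop k;
         conj (ladderHop k), 0, 0, I;
         0, conj (ladderHop k), -I, 0] :=
  rfl

theorem ladderBloch_isHermitian (k : ℝ) : (ladderBloch k).IsHermitian := by
  ext i j
  fin_cases i <;> fin_cases j <;> simp [ladderBloch_eq, conjTranspose_apply]

theorem ladderBloch_sq (k : ℝ) :
    ladderBloch k ^ 2 = algebraMap ℂ _ ((1 + normSq (ladderHop k) : ℝ) : ℂ) := by
  have hnormSq : (normSq (ladderHop k) : ℂ) = conj (ladderHop k) * ladderHop k :=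
    normSq_eq_conj_mul_self
  ext i j
  fin_cases i <;> fin_cases j <;>
    simp [sq, ladderBloch_eq, mul_apply, Fin.sum_univ_four, algebraMap_matrix_apply,
      hnormSq] <;> ring

theorem sq_eq_of_mem_spectrum_ladderBloch {k : ℝ} {μ : ℂ}
    (hμ : μ ∈ spectrum ℂ (ladderBloch k)) : μ ^ 2 = ((1 + normSq (ladderHop k) : ℝ) : ℂ) :=
  spectrum.sq_eq_of_sq_eq_algebraMap (ladderBloch_sq k) hμ

/-- For the π-flux ground-state orientation of the ladder, the Bloch Hamiltonian `H(k)` is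
Hermitian and every eigenvalue `μ` of `H(k)` satisfies `|μ| ≥ 1` for every `k`, and the
bound is attained; hence the single-particle gap is `2λ₁ = 2`. -/
theorem ladder_pi_flux_gap :
    (∀ k : ℝ, (ladderBloch k).IsHermitian) ∧
    (∀ (k : ℝ) (μ : ℂ), μ ∈ spectrum ℂ (ladderBloch k) → 1 ≤ ‖μ‖) ∧
    (∃ (k : ℝ) (μ : ℂ), μ ∈ spectrum ℂ (ladderBloch k) ∧ ‖μ‖ = 1) := by
  refine ⟨ladderBloch_isHermitian, fun k μ hμ => ?_, ?_⟩
  · exact one_le_norm_of_sq_eq (le_add_of_nonneg_right (normSq_nonneg _))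
      (sq_eq_of_mem_spectrum_ladderBloch hμ)
  · obtain ⟨μ, hμ⟩ := spectrum.nonempty_of_isAlgClosed_of_finiteDimensional ℂ (ladderBloch 0)
    have hμ_sq : μ ^ 2 = 1 := by
      simpa [ladderHop_zero] using sq_eq_of_mem_spectrum_ladderBloch hμ
    exact ⟨0, μ, hμ, norm_eq_one_of_pow_eq_one hμ_sq two_ne_zero⟩
end
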